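/- arXiv:1605.06624 — 5 statements merged into one kernel-verified Lean document; each statement's English description precedes it below -/
import Mathlib

section
/- For every u in B_G there exists z' ∈ T' such that G u − ω̄(ρ(G u)) = ᵗγ₀ z', and z' is unique; consequently the generalized trace γ_G u = (ᵗγ₀)⁻¹(G u − ω̄ ρ G u) ∈ T' is well defined. -/
open NormedSpace

section Transpose

variable {𝕜 L B0 B1 : Type*} [NontriviallyNormedField 𝕜]
  [NormedAddCommGroup L] [NormedSpace 𝕜 L]
  [NormedAddCommGroup B0] [NormedSpace 𝕜 B0]
  [NormedAddCommGroup B1] [NormedSpace 𝕜 B1]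
  {j0 : B0 →L[𝕜] L} {j1 : B1 →L[𝕜] L} {j : B0 →L[𝕜] B1}

theorem comp_comp_eq_comp_of_factor (hcomp : ∀ v : B0, j0 v = j1 (j v))
    (l' : StrongDual 𝕜 L) : (l'.comp j1).comp j = l'.comp j0 := by
  ext v
  simp [hcomp v]

/-- Since `ᵗj ∘ ᵗj₁ = ᵗj₀`, the map `ω` is a right inverse of `ᵗj` on `ᵗj₀(L')`. -/
theorem sub_comp_eq_zero_of_comp_eq (hcomp : ∀ v : B0, j0 v = j1 (j v))
    {ω : StrongDual 𝕜 B0 → StrongDual 𝕜 B1}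
    (hω : ∀ l' : StrongDual 𝕜 L, ω (l'.comp j0) = l'.comp j1)
    {b' : StrongDual 𝕜 B1} {l' : StrongDual 𝕜 L} (hb' : b'.comp j = l'.comp j0) :
    (b' - ω (b'.comp j)).comp j = 0 := by
  rw [ContinuousLinearMap.sub_comp, hb', hω, comp_comp_eq_comp_of_factor hcomp, sub_self]

end Transpose

theorem trace_well_defined_general
    {L B0 B1 T : Type*}
    [NormedAddCommGroup L] [NormedSpace ℝ L]
    [NormedAddCommGroup B0] [NormedSpace ℝ B0]
    [NormedAddCommGroup B1] [NormedSpace ℝ B1]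
    [NormedAddCommGroup T] [NormedSpace ℝ T]
    (j0 : B0 →L[ℝ] L) (j1 : B1 →L[ℝ] L) (j : B0 →L[ℝ] B1) (γ0 : B1 →L[ℝ] T)
    (hcomp : ∀ v : B0, j0 v = j1 (j v))
    (hrangeker : Set.range (fun t' : StrongDual ℝ T => t'.comp γ0) =
      {b' : StrongDual ℝ B1 | b'.comp j = 0})
    (htγ0inj : Function.Injective (fun t' : StrongDual ℝ T => t'.comp γ0))
    (ω : StrongDual ℝ B0 → StrongDual ℝ B1)
    (hω : ∀ l' : StrongDual ℝ L, ω (l'.comp j0) = l'.comp j1)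
    (G : B1 → StrongDual ℝ B1) :
    ∀ u ∈ {u : B1 | ∃ l' : StrongDual ℝ L, (G u).comp j = l'.comp j0},
      ∃! z' : StrongDual ℝ T, G u - ω ((G u).comp j) = z'.comp γ0 := by
  rintro u ⟨l', hl'⟩
  have hmem : G u - ω ((G u).comp j) ∈ Set.range (fun t' : StrongDual ℝ T => t'.comp γ0) := by
    rw [hrangeker]
    exact sub_comp_eq_zero_of_comp_eq hcomp hω hl'
  simpa only [eq_comm] using htγ0inj.existsUnique_of_mem_range hmem

/-- For every u ∈ B_G there exists a unique z' ∈ T' such that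
G u − ω̄(ρ(G u)) = ᵗγ₀ z'; consequently the generalized trace
γ_G u = (ᵗγ₀)⁻¹(G u − ω̄ ρ G u) ∈ T' is well defined. Here ρ = ᵗj,
B_G = {u ∈ B₁ : ρ(G u) ∈ ᵗj₀(L')}, Im ᵗγ₀ = ker ᵗj, ᵗγ₀ injective and
ω̄(ᵗj₀ l') = ᵗj₁ l'. -/
theorem trace_well_defined
    {L B0 B1 T : Type*}
    [NormedAddCommGroup L] [NormedSpace ℝ L] [CompleteSpace L]
    [NormedAddCommGroup B0] [NormedSpace ℝ B0] [CompleteSpace B0]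
    [NormedAddCommGroup B1] [NormedSpace ℝ B1] [CompleteSpace B1]
    [NormedAddCommGroup T] [NormedSpace ℝ T] [CompleteSpace T]
    (j0 : B0 →L[ℝ] L) (j1 : B1 →L[ℝ] L) (j : B0 →L[ℝ] B1) (γ0 : B1 →L[ℝ] T)
    (hj0inj : Function.Injective j0) (hj0dense : DenseRange j0)
    (hj1inj : Function.Injective j1) (hj1dense : DenseRange j1)
    (hjinj : Function.Injective j) (hjclosed : IsClosed (Set.range j))
    (hγ0closed : IsClosed (Set.range γ0))
    (hcomp : ∀ v : B0, j0 v = j1 (j v))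
    (hrangeker : Set.range (fun t' : StrongDual ℝ T => t'.comp γ0) =
      {b' : StrongDual ℝ B1 | b'.comp j = 0})
    (htγ0inj : Function.Injective (fun t' : StrongDual ℝ T => t'.comp γ0))
    (ω : StrongDual ℝ B0 → StrongDual ℝ B1)
    (hω : ∀ l' : StrongDual ℝ L, ω (l'.comp j0) = l'.comp j1)
    (G : B1 → StrongDual ℝ B1) (hG : Continuous G) :
    ∀ u ∈ {u : B1 | ∃ l' : StrongDual ℝ L, (G u).comp j = l'.comp j0},
      ∃! z' : StrongDual ℝ T, G u - ω ((G u).comp j) = z'.comp γ0 :=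
  trace_well_defined_general j0 j1 j γ0 hcomp hrangeker htγ0inj ω hω G
end

section
/- Under the density hypothesis j_m(C_m⁺) dense in C⁺, the dual cone D_m⁺ equals the closure of ᵗj_m(D⁺) in B_m': that is, D_m⁺ = closure(ᵗj_m D⁺). -/
/-!
A functional `f` outside the closed convex cone `closure (ᵗjₘ D⁺)` is separated from it by
Hahn–Banach in `Bₘ'`; by reflexivity the separating functional is evaluation at some `u : Bₘ`.
Then `0 ≤ g (jₘ u)` for every `g ∈ D⁺`, so `jₘ u ∈ C⁺` by the bipolar theorem in `L`, while
`f u < 0`: hence `f ∉ Dₘ⁺`. The other inclusion holds because `Dₘ⁺` is closed.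
-/

open NormedSpace

namespace ProperCone

section OfConvex

variable {𝕜 E : Type*} [Field 𝕜] [LinearOrder 𝕜] [IsStrictOrderedRing 𝕜] [AddCommGroup E]
  [Module 𝕜 E] [TopologicalSpace E]

def ofConvex (C : Set E) (hconv : Convex 𝕜 C) (h0 : (0 : E) ∈ C)
    (hsmul : ∀ c : 𝕜, 0 ≤ c → ∀ x ∈ C, c • x ∈ C) (hclosed : IsClosed C) : ProperCone 𝕜 E where
  carrier := C
  add_mem' {x y} hx hy := by
    have hmid := hconv hx hy (a := 2⁻¹) (b := 2⁻¹) (by positivity) (by positivity) (by norm_num)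
    simpa [← smul_add, smul_smul] using hsmul 2 zero_le_two _ hmid
  zero_mem' := h0
  smul_mem' c x hx := hsmul c c.2 x hx
  isClosed' := hclosed

end OfConvex

section LocallyConvex

variable {E : Type*} [AddCommGroup E] [Module ℝ E] [TopologicalSpace E] [ContinuousSMul ℝ E]

def strongDual (s : Set E) : ProperCone ℝ (StrongDual ℝ E) where
  toSubmodule := PointedCone.dual (topDualPairing ℝ E).flip s
  isClosed' := PointedCone.isClosed_dual fun x ↦ continuous_eval_const x

@[simp] lemma mem_strongDual {s : Set E} {f : StrongDual ℝ E} :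
    f ∈ strongDual s ↔ ∀ x ∈ s, 0 ≤ f x := .rfl

lemma mem_iff_forall_mem_strongDual [IsTopologicalAddGroup E] [LocallyConvexSpace ℝ E]
    (K : ProperCone ℝ E) {x : E} :
    x ∈ K ↔ ∀ f ∈ strongDual (K : Set E), 0 ≤ f x := by
  refine ⟨fun hx f hf ↦ mem_strongDual.1 hf x hx, fun h ↦ ?_⟩
  by_contra hx
  obtain ⟨f, hfK, hfx⟩ := K.hyperplane_separation_point hx
  exact hfx.not_ge (h f hfK)

end LocallyConvex

section Reflexive

variable {E F : Type*} [NormedAddCommGroup E] [NormedSpace ℝ E]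
  [NormedAddCommGroup F] [NormedSpace ℝ F]

lemma mem_of_forall_nonneg_apply (hE : Function.Surjective (inclusionInDoubleDual ℝ E))
    (Q : ProperCone ℝ (StrongDual ℝ E)) {f : StrongDual ℝ E}
    (hf : ∀ x : E, (∀ g ∈ Q, 0 ≤ g x) → 0 ≤ f x) : f ∈ Q := by
  by_contra hfQ
  obtain ⟨Φ, hΦQ, hΦf⟩ := Q.hyperplane_separation_point hfQ
  obtain ⟨x, rfl⟩ := hE Φ
  exact hΦf.not_ge (hf x hΦQ)

theorem strongDual_comap (hE : Function.Surjective (inclusionInDoubleDual ℝ E))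
    (T : E →L[ℝ] F) (K : ProperCone ℝ F) :
    strongDual (K.comap T : Set E) =
      (strongDual (K : Set F)).map (ContinuousLinearMap.precomp ℝ T) := by
  refine le_antisymm (fun f hf ↦ mem_of_forall_nonneg_apply hE _ fun x hx ↦ ?_) ?_
  · refine mem_strongDual.1 hf x (K.mem_iff_forall_mem_strongDual.2 fun g hg ↦ ?_)
    exact hx (g.comp T) (subset_closure ⟨g, hg, rfl⟩)
  · rw [ClosedSubmodule.map_le_iff_le_comap]
    exact fun g hg x hx ↦ mem_strongDual.1 hg (T x) hx

end Reflexive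

end ProperCone

theorem dual_cone_eq_closure_transpose_image_general
    {L Bm : Type*}
    [NormedAddCommGroup L] [NormedSpace ℝ L]
    [NormedAddCommGroup Bm] [NormedSpace ℝ Bm]
    (hBmrefl : Function.Surjective (inclusionInDoubleDual ℝ Bm))
    (jm : Bm →L[ℝ] L)
    (C : Set L)
    (hCclosed : IsClosed C) (hCconvex : Convex ℝ C) (hC0 : (0 : L) ∈ C)
    (hCcone : ∀ c : ℝ, 0 ≤ c → ∀ x ∈ C, c • x ∈ C) :
    {u' : StrongDual ℝ Bm | ∀ u : Bm, jm u ∈ C → 0 ≤ u' u} =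
      closure ((fun l' : StrongDual ℝ L => l'.comp jm) ''
        {l' : StrongDual ℝ L | ∀ x ∈ C, 0 ≤ l' x}) :=
  congrArg SetLike.coe <|
    ProperCone.strongDual_comap hBmrefl jm (.ofConvex C hCconvex hC0 hCcone hCclosed)

/-- Under the density hypothesis j_m(C_m⁺) dense in C⁺, the dual
cone D_m⁺ equals the closure of ᵗj_m(D⁺) in B_m'. -/
theorem dual_cone_eq_closure_transpose_image
    {L Bm : Type*}
    [NormedAddCommGroup L] [NormedSpace ℝ L] [CompleteSpace L]
    [NormedAddCommGroup Bm] [NormedSpace ℝ Bm] [CompleteSpace Bm]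
    (hLrefl : Function.Surjective (inclusionInDoubleDual ℝ L))
    (hBmrefl : Function.Surjective (inclusionInDoubleDual ℝ Bm))
    (jm : Bm →L[ℝ] L) (hjminj : Function.Injective jm)
    (hjmdense : DenseRange jm)
    (C : Set L)
    (hCclosed : IsClosed C) (hCconvex : Convex ℝ C) (hC0 : (0 : L) ∈ C)
    (hCcone : ∀ c : ℝ, 0 ≤ c → ∀ x ∈ C, c • x ∈ C)
    (hCgen : ∀ x : L, ∃ a ∈ C, ∃ b ∈ C, x = a - b)
    (hCpointed : C ∩ (-C) = {0})
    (hdense : C ⊆ closure (jm '' {v : Bm | jm v ∈ C})) :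
    {u' : StrongDual ℝ Bm | ∀ u : Bm, jm u ∈ C → 0 ≤ u' u} =
      closure ((fun l' : StrongDual ℝ L => l'.comp jm) ''
        {l' : StrongDual ℝ L | ∀ x ∈ C, 0 ≤ l' x}) :=
  dual_cone_eq_closure_transpose_image_general hBmrefl jm C hCclosed hCconvex hC0 hCcone
end

section
/- Separation step: if u' ∈ D_m⁺ does not lie in the closure of ᵗj_m(D⁺) in B_m', then (using reflexivity of B_m) there exists u ∈ B_m with ⟨ᵗj_m l', u⟩ ≥ 0 for all l' ∈ D⁺ and ⟨u', u⟩ < 0; this implies j_m u ∈ C⁺ (when (C⁺)°° = C⁺ via bipolar), contradicting u' ∈ D_m⁺. Hence D_m⁺ ⊆ closure(ᵗj_m D⁺). -/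
open NormedSpace

/-!
Since `B_m` is reflexive, a functional on `B_m'` is evaluation at some `u ∈ B_m`, so Hahn–Banach
separation of `u'` from the closed convex cone `closure (ᵗj_m D⁺)` is realised by a point `u`.
Nonnegativity of `u` against `ᵗj_m D⁺` says that `j_m u` lies in the bipolar of `C⁺`, which is
`C⁺` itself; then `u' ∈ D_m⁺` forces `0 ≤ u' u`, contradicting the separation.
-/

namespace ProperCone

variable {E : Type*} [TopologicalSpace E] [AddCommGroup E] [Module ℝ E]

def ofIsClosedConvex (C : Set E) (hclosed : IsClosed C) (hconv : Convex ℝ C) (h0 : (0 : E) ∈ C)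
    (hsmul : ∀ c : ℝ, 0 ≤ c → ∀ x ∈ C, c • x ∈ C) : ProperCone ℝ E where
  carrier := C
  zero_mem' := h0
  smul_mem' c _ hx := hsmul c c.2 _ hx
  add_mem' {x y} hx hy := by
    have hmid := hconv hx hy (by norm_num : (0 : ℝ) ≤ 1 / 2) (by norm_num : (0 : ℝ) ≤ 1 / 2)
      (by norm_num)
    convert hsmul 2 zero_le_two _ hmid using 1
    simp only [smul_add, smul_smul]
    norm_num
  isClosed' := hclosed

variable [IsTopologicalAddGroup E] [ContinuousSMul ℝ E] [LocallyConvexSpace ℝ E]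

theorem mem_of_forall_nonneg (K : ProperCone ℝ E) {x : E}
    (hx : ∀ f : StrongDual ℝ E, (∀ y ∈ K, 0 ≤ f y) → 0 ≤ f x) : x ∈ K := by
  by_contra hxK
  obtain ⟨f, hfK, hfx⟩ := K.hyperplane_separation_point hxK
  exact (hx f hfK).not_gt hfx

end ProperCone

theorem PointedCone.exists_apply_nonneg_and_neg_of_notMem_closure
    {E : Type*} [NormedAddCommGroup E] [NormedSpace ℝ E]
    (hE : Function.Surjective (inclusionInDoubleDual ℝ E)) (K : PointedCone ℝ (StrongDual ℝ E))
    {φ : StrongDual ℝ E} (hφ : φ ∉ closure (K : Set (StrongDual ℝ E))) :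
    ∃ u : E, (∀ ψ ∈ K, 0 ≤ ψ u) ∧ φ u < 0 := by
  obtain ⟨F, hFK, hFφ⟩ := ProperCone.hyperplane_separation_point (Submodule.closure K) hφ
  obtain ⟨u, rfl⟩ := hE F
  exact ⟨u, fun ψ hψ => hFK ψ (subset_closure hψ), hFφ⟩

theorem separation_step_dual_cone_general
    {L Bm : Type*}
    [NormedAddCommGroup L] [NormedSpace ℝ L]
    [NormedAddCommGroup Bm] [NormedSpace ℝ Bm]
    (hBmrefl : Function.Surjective (inclusionInDoubleDual ℝ Bm))
    (jm : Bm →L[ℝ] L)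
    (C : Set L)
    (hCclosed : IsClosed C) (hCconvex : Convex ℝ C) (hC0 : (0 : L) ∈ C)
    (hCcone : ∀ c : ℝ, 0 ≤ c → ∀ x ∈ C, c • x ∈ C) :
    (∀ u' ∈ {u' : StrongDual ℝ Bm | ∀ u : Bm, jm u ∈ C → 0 ≤ u' u},
      u' ∉ closure ((fun l' : StrongDual ℝ L => l'.comp jm) ''
          {l' : StrongDual ℝ L | ∀ x ∈ C, 0 ≤ l' x}) →
      ∃ u : Bm, (∀ l' ∈ {l' : StrongDual ℝ L | ∀ x ∈ C, 0 ≤ l' x},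
          0 ≤ (l'.comp jm) u) ∧ u' u < 0) ∧
    {u' : StrongDual ℝ Bm | ∀ u : Bm, jm u ∈ C → 0 ≤ u' u} ⊆
      closure ((fun l' : StrongDual ℝ L => l'.comp jm) ''
        {l' : StrongDual ℝ L | ∀ x ∈ C, 0 ≤ l' x}) := by
  let dualCone : PointedCone ℝ (StrongDual ℝ L) := PointedCone.dual (topDualPairing ℝ L).flip C
  let transpose : StrongDual ℝ L →ₗ[ℝ] StrongDual ℝ Bm :=
    (ContinuousLinearMap.precomp ℝ jm : StrongDual ℝ L →L[ℝ] StrongDual ℝ Bm)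
  have separation : ∀ u' : StrongDual ℝ Bm, u' ∉ closure (transpose '' dualCone) →
      ∃ u : Bm, (∀ l' ∈ dualCone, 0 ≤ (l'.comp jm) u) ∧ u' u < 0 := by
    intro u' hu'
    obtain ⟨u, hpos, hneg⟩ :=
      (dualCone.map transpose).exists_apply_nonneg_and_neg_of_notMem_closure hBmrefl hu'
    exact ⟨u, fun l' hl' => hpos _ ⟨l', hl', rfl⟩, hneg⟩
  refine ⟨fun u' _ => separation u', fun u' hu' => ?_⟩
  by_contra hu'S
  obtain ⟨u, hpos, hneg⟩ := separation u' hu'S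
  have hju : jm u ∈ C :=
    (ProperCone.ofIsClosedConvex C hCclosed hCconvex hC0 hCcone).mem_of_forall_nonneg hpos
  exact (hu' u hju).not_gt hneg

/-- Separation step: if u' ∈ D_m⁺ does not lie in the closure of
ᵗj_m(D⁺) in B_m', then (using reflexivity of B_m) there exists u ∈ B_m with
⟨ᵗj_m l', u⟩ ≥ 0 for all l' ∈ D⁺ and ⟨u', u⟩ < 0. Hence
D_m⁺ ⊆ closure(ᵗj_m D⁺). -/
theorem separation_step_dual_cone
    {L Bm : Type*}
    [NormedAddCommGroup L] [NormedSpace ℝ L] [CompleteSpace L]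
    [NormedAddCommGroup Bm] [NormedSpace ℝ Bm] [CompleteSpace Bm]
    (hLrefl : Function.Surjective (inclusionInDoubleDual ℝ L))
    (hBmrefl : Function.Surjective (inclusionInDoubleDual ℝ Bm))
    (jm : Bm →L[ℝ] L) (hjminj : Function.Injective jm)
    (hjmdense : DenseRange jm)
    (C : Set L)
    (hCclosed : IsClosed C) (hCconvex : Convex ℝ C) (hC0 : (0 : L) ∈ C)
    (hCcone : ∀ c : ℝ, 0 ≤ c → ∀ x ∈ C, c • x ∈ C)
    (hdense : C ⊆ closure (jm '' {v : Bm | jm v ∈ C})) :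
    (∀ u' ∈ {u' : StrongDual ℝ Bm | ∀ u : Bm, jm u ∈ C → 0 ≤ u' u},
      u' ∉ closure ((fun l' : StrongDual ℝ L => l'.comp jm) ''
          {l' : StrongDual ℝ L | ∀ x ∈ C, 0 ≤ l' x}) →
      ∃ u : Bm, (∀ l' ∈ {l' : StrongDual ℝ L | ∀ x ∈ C, 0 ≤ l' x},
          0 ≤ (l'.comp jm) u) ∧ u' u < 0) ∧
    {u' : StrongDual ℝ Bm | ∀ u : Bm, jm u ∈ C → 0 ≤ u' u} ⊆
      closure ((fun l' : StrongDual ℝ L => l'.comp jm) ''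
        {l' : StrongDual ℝ L | ∀ x ∈ C, 0 ≤ l' x}) :=
  separation_step_dual_cone_general hBmrefl jm C hCclosed hCconvex hC0 hCcone
end

section
/- For all u ∈ C₁⁺ and v' ∈ ᵗj₀(D⁺), one has ⟨ω̄ v', u⟩₁ = sup{⟨v', v⟩₀ : v ∈ C₀⁺, u − j v ∈ C₁⁺}, assuming there exists a sequence (v_p) in C₀⁺ with u − j v_p ∈ C₁⁺ for all p and ‖j₀ v_p − j₁ u‖_L → 0. -/
open Filter Topology

/-! Every admissible `v` satisfies `⟨v', v⟩₀ = l'(j₁ u) - l'(j₁ (u - j v)) ≤ l'(j₁ u) = ⟨ω̄ v', u⟩₁`,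
since `l'` is nonnegative on `C`; the approximating sequence `(v_p)` is admissible and
`l'(j₀ v_p) → l'(j₁ u)`, so this upper bound is the supremum. -/

theorem csSup_eq_of_mem_upperBounds_of_tendsto {α ι : Type*} [ConditionallyCompleteLinearOrder α]
    [TopologicalSpace α] [OrderTopology α] {s : Set α} {a : α} {l : Filter ι} [l.NeBot]
    {f : ι → α} (ha : a ∈ upperBounds s) (hf : ∀ᶠ i in l, f i ∈ s) (hlim : Tendsto f l (𝓝 a)) :
    sSup s = a :=
  have ⟨i, hi⟩ := hf.exists
  (isLUB_of_mem_closure ha (mem_closure_of_tendsto hlim hf)).csSup_eq ⟨f i, hi⟩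

theorem apply_le_apply_of_sub_mem {E F : Type*} [AddCommGroup E] [FunLike F E ℝ]
    [AddMonoidHomClass F E ℝ] {C : Set E} (f : F) (hf : ∀ x ∈ C, 0 ≤ f x) {x y : E}
    (h : y - x ∈ C) : f x ≤ f y :=
  sub_nonneg.mp (map_sub f y x ▸ hf _ h)

theorem omega_pairing_eq_sup_general
    {L B0 B1 : Type*}
    [NormedAddCommGroup L] [NormedSpace ℝ L]
    [NormedAddCommGroup B0] [NormedSpace ℝ B0]
    [NormedAddCommGroup B1] [NormedSpace ℝ B1]
    (j0 : B0 →L[ℝ] L) (j1 : B1 →L[ℝ] L) (j : B0 →L[ℝ] B1)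
    (hcomp : ∀ v : B0, j0 v = j1 (j v))
    (C : Set L)
    (ω : StrongDual ℝ B0 → StrongDual ℝ B1)
    (hω : ∀ m' : StrongDual ℝ L, ω (m'.comp j0) = m'.comp j1)
    (u : B1)
    (l' : StrongDual ℝ L) (hl' : ∀ x ∈ C, 0 ≤ l' x)
    (v' : StrongDual ℝ B0) (hv' : v' = l'.comp j0)
    (vseq : ℕ → B0)
    (hvseq0 : ∀ p : ℕ, j0 (vseq p) ∈ C)
    (hvseq1 : ∀ p : ℕ, j1 (u - j (vseq p)) ∈ C)
    (hvseqlim : Filter.Tendsto (fun p => j0 (vseq p)) Filter.atTop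
      (nhds (j1 u))) :
    ω v' u = sSup {r : ℝ | ∃ v : B0, j0 v ∈ C ∧ j1 (u - j v) ∈ C ∧ r = v' v} := by
  subst hv'
  rw [hω l']
  refine (csSup_eq_of_mem_upperBounds_of_tendsto ?_ ?_
    ((l'.continuous.tendsto _).comp hvseqlim)).symm
  · rintro _ ⟨v, -, hv, rfl⟩
    rw [ContinuousLinearMap.comp_apply, hcomp]
    exact apply_le_apply_of_sub_mem l' hl' (by rwa [map_sub] at hv)
  · exact Eventually.of_forall fun p => ⟨vseq p, hvseq0 p, hvseq1 p, rfl⟩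

/-- For all u ∈ C₁⁺ and v' = ᵗj₀ l' with l' ∈ D⁺, one has
⟨ω̄ v', u⟩₁ = sup{⟨v', v⟩₀ : v ∈ C₀⁺, u − j v ∈ C₁⁺}, assuming there exists a
sequence (v_p) in C₀⁺ with u − j v_p ∈ C₁⁺ for all p and
‖j₀ v_p − j₁ u‖_L → 0. -/
theorem omega_pairing_eq_sup
    {L B0 B1 : Type*}
    [NormedAddCommGroup L] [NormedSpace ℝ L] [CompleteSpace L]
    [NormedAddCommGroup B0] [NormedSpace ℝ B0] [CompleteSpace B0]
    [NormedAddCommGroup B1] [NormedSpace ℝ B1] [CompleteSpace B1]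
    (j0 : B0 →L[ℝ] L) (j1 : B1 →L[ℝ] L) (j : B0 →L[ℝ] B1)
    (hj0dense : DenseRange j0) (hj1dense : DenseRange j1)
    (hcomp : ∀ v : B0, j0 v = j1 (j v))
    (C : Set L)
    (hCclosed : IsClosed C) (hCconvex : Convex ℝ C) (hC0 : (0 : L) ∈ C)
    (hCcone : ∀ c : ℝ, 0 ≤ c → ∀ x ∈ C, c • x ∈ C)
    (ω : StrongDual ℝ B0 → StrongDual ℝ B1)
    (hω : ∀ m' : StrongDual ℝ L, ω (m'.comp j0) = m'.comp j1)
    (u : B1) (hu : j1 u ∈ C)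
    (l' : StrongDual ℝ L) (hl' : ∀ x ∈ C, 0 ≤ l' x)
    (v' : StrongDual ℝ B0) (hv' : v' = l'.comp j0)
    (vseq : ℕ → B0)
    (hvseq0 : ∀ p : ℕ, j0 (vseq p) ∈ C)
    (hvseq1 : ∀ p : ℕ, j1 (u - j (vseq p)) ∈ C)
    (hvseqlim : Filter.Tendsto (fun p => j0 (vseq p)) Filter.atTop
      (nhds (j1 u))) :
    ω v' u = sSup {r : ℝ | ∃ v : B0, j0 v ∈ C ∧ j1 (u - j v) ∈ C ∧ r = v' v} :=
  omega_pairing_eq_sup_general j0 j1 j hcomp C ω hω u l' hl' v' hv' vseq hvseq0 hvseq1 hvseqlim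
end

section
/- Relative Green's formula: for every u ∈ B_{G,E} and every y ∈ B₁, ⟨G u, y⟩₁ = ⟨ω̄_E ρ G u, y⟩₁ + ⟨γ_{G,E} u, γ₀ y⟩_{T',T}, where γ_{G,E} is the restriction of γ_G to B_{G,E} ⊆ B_G. -/
/-! Since `l₀ = k ∘ j₀`, every `ᵗl₀ e'` equals `ᵗj₀ (ᵗk e')`; hence `B_{G,E} ⊆ B_G` and on `ᵗl₀(E')`
the map `ω̄_E` agrees with `ω̄`. The relative formula is then Green's formula on `B_G`, i.e. the
defining identity `ᵗγ₀ (γ_G u) = G u - ω̄ ρ G u` evaluated at `y`. -/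

section

variable {L B0 B1 T E : Type*}
    [NormedAddCommGroup L] [NormedSpace ℝ L]
    [NormedAddCommGroup B0] [NormedSpace ℝ B0]
    [NormedAddCommGroup B1] [NormedSpace ℝ B1]
    [NormedAddCommGroup T] [NormedSpace ℝ T]
    [NormedAddCommGroup E] [NormedSpace ℝ E]

theorem dual_comp_eq_of_factor {k : L →L[ℝ] E} {j0 : B0 →L[ℝ] L} {l0 : B0 →L[ℝ] E}
    (hl0 : ∀ v : B0, l0 v = k (j0 v)) (e' : StrongDual ℝ E) :
    e'.comp l0 = (e'.comp k).comp j0 :=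
  ContinuousLinearMap.ext fun v => congrArg e' (hl0 v)

theorem restricted_transpose_eq {k : L →L[ℝ] E} {j0 : B0 →L[ℝ] L} {j1 : B1 →L[ℝ] L}
    {l0 : B0 →L[ℝ] E} {l1 : B1 →L[ℝ] E}
    (hl0 : ∀ v : B0, l0 v = k (j0 v)) (hl1 : ∀ w : B1, l1 w = k (j1 w))
    {ω ωE : StrongDual ℝ B0 → StrongDual ℝ B1}
    (hω : ∀ m' : StrongDual ℝ L, ω (m'.comp j0) = m'.comp j1)
    (hωE : ∀ e' : StrongDual ℝ E, ωE (e'.comp l0) = e'.comp l1) (e' : StrongDual ℝ E) :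
    ωE (e'.comp l0) = ω (e'.comp l0) := by
  rw [hωE, dual_comp_eq_of_factor hl0, hω, dual_comp_eq_of_factor hl1]

theorem green_formula {j : B0 →L[ℝ] B1} {γ0 : B1 →L[ℝ] T}
    {ω : StrongDual ℝ B0 → StrongDual ℝ B1} {g : StrongDual ℝ B1} {t : StrongDual ℝ T}
    (ht : t.comp γ0 = g - ω (g.comp j)) (y : B1) :
    g y = ω (g.comp j) y + t (γ0 y) := by
  have hy := congrArg (fun f : StrongDual ℝ B1 => f y) ht
  simp only [ContinuousLinearMap.comp_apply, sub_apply] at hy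
  linarith

end

theorem relative_green_formula_general
    {L B0 B1 T E : Type*}
    [NormedAddCommGroup L] [NormedSpace ℝ L]
    [NormedAddCommGroup B0] [NormedSpace ℝ B0]
    [NormedAddCommGroup B1] [NormedSpace ℝ B1]
    [NormedAddCommGroup T] [NormedSpace ℝ T]
    [NormedAddCommGroup E] [NormedSpace ℝ E]
    (j0 : B0 →L[ℝ] L) (j1 : B1 →L[ℝ] L) (j : B0 →L[ℝ] B1) (γ0 : B1 →L[ℝ] T)
    (k : L →L[ℝ] E)
    (l0 : B0 →L[ℝ] E) (hl0 : ∀ v : B0, l0 v = k (j0 v))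
    (l1 : B1 →L[ℝ] E) (hl1 : ∀ w : B1, l1 w = k (j1 w))
    (ω : StrongDual ℝ B0 → StrongDual ℝ B1)
    (hω : ∀ m' : StrongDual ℝ L, ω (m'.comp j0) = m'.comp j1)
    (ωE : StrongDual ℝ B0 → StrongDual ℝ B1)
    (hωE : ∀ e' : StrongDual ℝ E, ωE (e'.comp l0) = e'.comp l1)
    (G : B1 → StrongDual ℝ B1)
    (γG : B1 → StrongDual ℝ T)
    (hγG : ∀ u ∈ {u : B1 | ∃ m' : StrongDual ℝ L, (G u).comp j = m'.comp j0},
      (γG u).comp γ0 = G u - ω ((G u).comp j)) :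
    ∀ u ∈ {u : B1 | ∃ e' : StrongDual ℝ E, (G u).comp j = e'.comp l0},
      ∀ y : B1, G u y = ωE ((G u).comp j) y + γG u (γ0 y) := by
  rintro u ⟨e', hρ⟩ y
  have hu : u ∈ {u : B1 | ∃ m' : StrongDual ℝ L, (G u).comp j = m'.comp j0} :=
    ⟨e'.comp k, hρ.trans (dual_comp_eq_of_factor hl0 e')⟩
  rw [hρ, restricted_transpose_eq hl0 hl1 hω hωE, ← hρ]
  exact green_formula (hγG u hu) y

/-- Relative Green's formula: for every u ∈ B_{G,E} and every
y ∈ B₁, ⟨G u, y⟩₁ = ⟨ω̄_E ρ G u, y⟩₁ + ⟨γ_{G,E} u, γ₀ y⟩_{T',T}, where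
B_{G,E} = {u ∈ B₁ : ρ G u ∈ ᵗl₀(E')} ⊆ B_G, ω̄_E is the restriction of ω̄,
and γ_{G,E} is the restriction of γ_G to B_{G,E}. -/
theorem relative_green_formula
    {L B0 B1 T E : Type*}
    [NormedAddCommGroup L] [NormedSpace ℝ L] [CompleteSpace L]
    [NormedAddCommGroup B0] [NormedSpace ℝ B0] [CompleteSpace B0]
    [NormedAddCommGroup B1] [NormedSpace ℝ B1] [CompleteSpace B1]
    [NormedAddCommGroup T] [NormedSpace ℝ T] [CompleteSpace T]
    [NormedAddCommGroup E] [NormedSpace ℝ E] [CompleteSpace E]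
    (j0 : B0 →L[ℝ] L) (j1 : B1 →L[ℝ] L) (j : B0 →L[ℝ] B1) (γ0 : B1 →L[ℝ] T)
    (hcomp : ∀ v : B0, j0 v = j1 (j v))
    (hrangeker : Set.range (fun t' : StrongDual ℝ T => t'.comp γ0) =
      {b' : StrongDual ℝ B1 | b'.comp j = 0})
    (htγ0inj : Function.Injective (fun t' : StrongDual ℝ T => t'.comp γ0))
    (k : L →L[ℝ] E) (hkinj : Function.Injective k) (hkdense : DenseRange k)
    (l0 : B0 →L[ℝ] E) (hl0 : ∀ v : B0, l0 v = k (j0 v))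
    (l1 : B1 →L[ℝ] E) (hl1 : ∀ w : B1, l1 w = k (j1 w))
    (ω : StrongDual ℝ B0 → StrongDual ℝ B1)
    (hω : ∀ m' : StrongDual ℝ L, ω (m'.comp j0) = m'.comp j1)
    (ωE : StrongDual ℝ B0 → StrongDual ℝ B1)
    (hωE : ∀ e' : StrongDual ℝ E, ωE (e'.comp l0) = e'.comp l1)
    (G : B1 → StrongDual ℝ B1) (hG : Continuous G)
    (γG : B1 → StrongDual ℝ T)
    (hγG : ∀ u ∈ {u : B1 | ∃ m' : StrongDual ℝ L, (G u).comp j = m'.comp j0},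
      (γG u).comp γ0 = G u - ω ((G u).comp j)) :
    ∀ u ∈ {u : B1 | ∃ e' : StrongDual ℝ E, (G u).comp j = e'.comp l0},
      ∀ y : B1, G u y = ωE ((G u).comp j) y + γG u (γ0 y) :=
  relative_green_formula_general j0 j1 j γ0 k l0 hl0 l1 hl1 ω hω ωE hωE G γG hγG
end
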